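/- arXiv:2511.00988 — 3 statements merged into one kernel-verified Lean document; each statement's English description precedes it below -/
import Mathlib

section
/- Let m and h be probability measures on S and suppose there is a measurable set A with m(A) − h(A) = δ > 0. For N i.i.d. samples, the total variation distance between the mixed product m^{⊗(1−α)N} ⊗ h^{⊗αN} and h^{⊗N} is at least 1 − 2·exp(−N(1−α)²δ²/2). -/
open MeasureTheory Filter

/-- Total variation distance: sup over measurable sets of |P A - Q A|. -/
noncomputable def tv {S : Type*} [MeasurableSpace S] (P Q : Measure S) : ℝ :=
  ⨆ A : {A : Set S // MeasurableSet A}, |(P A.1).toReal - (Q A.1).toReal|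

/-!
Count the coordinates that land in `A`. Under `h^⊗N` the count has mean `N h(A)`; under the mixed
product the first `a = (1 - α) N` coordinates each add `δ` to the mean. Each indicator is
sub-Gaussian with variance proxy `1/4` (Hoeffding's lemma), so by Hoeffding's inequality the count
exceeds the midpoint `N h(A) + a δ / 2` with probability at most `exp (-2 (a δ / 2)² / N)` under
`h^⊗N`, and falls below it with at most the same probability under the mixed product. That event
thus separates the two measures by `1 - 2 exp (-N (1 - α)² δ² / 2)`.
-/

open ProbabilityTheory Real

section Hoeffding

variable {ι S : Type*} [Fintype ι] [MeasurableSpace S] (μ : ι → Measure S)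
  [∀ i, IsProbabilityMeasure (μ i)] {A : Set S}

lemma hasSubgaussianMGF_pi_sum_indicator_sub (hA : MeasurableSet A) :
    HasSubgaussianMGF (fun x : ι → S => ∑ i, (A.indicator 1 (x i) - (μ i).real A))
      (Fintype.card ι / 4) (Measure.pi μ) := by
  have hX (i : ι) : Measurable fun x : ι → S => A.indicator (1 : S → ℝ) (x i) :=
    (measurable_one.indicator hA).comp (measurable_pi_apply i)
  have hmean (i : ι) : ∫ x, A.indicator 1 (x i) ∂(Measure.pi μ) = (μ i).real A := by
    rw [← integral_indicator_one hA, ← (measurePreserving_eval μ i).map_eq,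
      integral_map (measurable_pi_apply i).aemeasurable
        (measurable_one.indicator hA).aestronglyMeasurable]
  have hsub (i : ι) : HasSubgaussianMGF (fun x : ι → S => A.indicator 1 (x i) - (μ i).real A)
      (1 / 4) (Measure.pi μ) := by
    have hIcc (x : ι → S) : A.indicator (1 : S → ℝ) (x i) ∈ Set.Icc 0 1 := by
      by_cases hx : x i ∈ A <;> simp [hx]
    rw [← hmean]
    convert hasSubgaussianMGF_of_mem_Icc (μ := Measure.pi μ) (hX i).aemeasurable
      (ae_of_all _ hIcc) using 1
    norm_num
  convert HasSubgaussianMGF.sum_of_iIndepFun (s := Finset.univ) (iIndepFun_pi (μ := μ)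
    (X := fun i (y : S) => A.indicator 1 y - (μ i).real A) fun i =>
      ((measurable_one.indicator hA).sub_const _).aemeasurable) fun i _ => hsub i using 1
  simp [div_eq_mul_inv]

lemma measureReal_pi_mean_add_le_sum_indicator (hA : MeasurableSet A) {ε : ℝ} (hε : 0 ≤ ε) :
    (Measure.pi μ).real {x | ∑ i, (μ i).real A + ε ≤ ∑ i, A.indicator 1 (x i)}
      ≤ exp (-2 * ε ^ 2 / Fintype.card ι) := by
  convert (hasSubgaussianMGF_pi_sum_indicator_sub μ hA).measure_ge_le hε using 2
  · ext x
    simp only [Set.mem_ofPred_eq, Finset.sum_sub_distrib]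
    constructor <;> intro <;> linarith
  · push_cast
    ring

lemma measureReal_pi_sum_indicator_le_mean_sub (hA : MeasurableSet A) {ε : ℝ} (hε : 0 ≤ ε) :
    (Measure.pi μ).real {x | ∑ i, A.indicator 1 (x i) ≤ ∑ i, (μ i).real A - ε}
      ≤ exp (-2 * ε ^ 2 / Fintype.card ι) := by
  convert (hasSubgaussianMGF_pi_sum_indicator_sub μ hA).neg.measure_ge_le hε using 2
  · ext x
    simp only [Set.mem_ofPred_eq, Pi.neg_apply, Finset.sum_sub_distrib]
    constructor <;> intro <;> linarith
  · push_cast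
    ring

end Hoeffding

lemma abs_measureReal_sub_le_tv {S : Type*} [MeasurableSpace S] {P Q : Measure S}
    [IsFiniteMeasure P] [IsFiniteMeasure Q] {E : Set S} (hE : MeasurableSet E) :
    |P.real E - Q.real E| ≤ tv P Q := by
  refine le_ciSup (f := fun B : {B : Set S // MeasurableSet B} => |P.real B - Q.real B|)
    ⟨P.real Set.univ + Q.real Set.univ, ?_⟩ ⟨E, hE⟩
  rintro _ ⟨B, rfl⟩
  have hP := measureReal_mono (μ := P) B.1.subset_univ
  have hQ := measureReal_mono (μ := Q) B.1.subset_univ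
  have hP₀ : 0 ≤ P.real B := measureReal_nonneg
  have hQ₀ : 0 ≤ Q.real B := measureReal_nonneg
  rw [abs_le]
  constructor <;> linarith

lemma one_sub_two_mul_le_tv {S : Type*} [MeasurableSpace S] {P Q : Measure S}
    [IsProbabilityMeasure P] [IsProbabilityMeasure Q] {E : Set S} (hE : MeasurableSet E) {r : ℝ}
    (hP : P.real Eᶜ ≤ r) (hQ : Q.real E ≤ r) : 1 - 2 * r ≤ tv P Q := by
  rw [measureReal_compl hE, probReal_univ] at hP
  linarith [le_abs_self (P.real E - Q.real E), abs_measureReal_sub_le_tv (P := P) (Q := Q) hE]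

theorem tv_mixed_ge_general {S : Type*} [MeasurableSpace S]
    (m h : Measure S) [IsProbabilityMeasure m] [IsProbabilityMeasure h]
    (A : Set S) (hA : MeasurableSet A) (δ α : ℝ) (hδpos : 0 < δ)
    (hmA : (m A).toReal = (h A).toReal + δ)
    (a b : ℕ)
    (ha : (a : ℝ) = (1 - α) * ((a : ℝ) + b)) :
    1 - 2 * Real.exp (-((((a : ℝ) + b) * (1 - α) ^ 2 * δ ^ 2) / 2))
      ≤ tv (Measure.pi fun i : Fin (a + b) => if (i : ℕ) < a then m else h)
           (Measure.pi fun _ : Fin (a + b) => h) := by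
  set ν : Fin (a + b) → Measure S := fun i => if (i : ℕ) < a then m else h
  have : ∀ i, IsProbabilityMeasure (ν i) := fun i => by dsimp only [ν]; split <;> infer_instance
  set ε : ℝ := a * δ / 2
  have hε : 0 ≤ ε := by positivity
  set E := {x : Fin (a + b) → S | ∑ _i : Fin (a + b), h.real A + ε ≤ ∑ i, A.indicator 1 (x i)}
  have hE : MeasurableSet E := measurableSet_le measurable_const <|
    Finset.measurable_sum _ fun i _ => (measurable_one.indicator hA).comp (measurable_pi_apply i)
  have hmean : ∑ i, (ν i).real A = ∑ _i : Fin (a + b), h.real A + 2 * ε := by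
    simp only [measureReal_def, ν, ε, Fin.sum_univ_add, Fin.val_castAdd, Fin.is_lt, ↓reduceIte,
      hmA, Finset.sum_const, Finset.card_univ, Fintype.card_fin, nsmul_eq_mul, Fin.val_natAdd,
      add_lt_iff_neg_left, not_lt_zero, Nat.cast_add]
    ring
  have hQ : (Measure.pi fun _ : Fin (a + b) => h).real E
      ≤ exp (-2 * ε ^ 2 / Fintype.card (Fin (a + b))) :=
    measureReal_pi_mean_add_le_sum_indicator (fun _ => h) hA hε
  have hP : (Measure.pi ν).real Eᶜ ≤ exp (-2 * ε ^ 2 / Fintype.card (Fin (a + b))) := by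
    refine (measureReal_mono fun x (hx : x ∈ Eᶜ) => ?_).trans
      (measureReal_pi_sum_indicator_le_mean_sub ν hA hε)
    simp only [E, Set.mem_compl_iff, Set.mem_ofPred_eq, not_le] at hx ⊢
    linarith
  have hexp : -2 * ε ^ 2 / Fintype.card (Fin (a + b))
      = -((((a : ℝ) + b) * (1 - α) ^ 2 * δ ^ 2) / 2) := by
    rw [Fintype.card_fin, Nat.cast_add, show ε = (1 - α) * (a + b) * δ / 2 by rw [← ha]]
    calc -2 * ((1 - α) * (a + b) * δ / 2) ^ 2 / ((a : ℝ) + b)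
        = -((1 - α) ^ 2 * δ ^ 2 / 2) * ((a + b) * (a + b) / (a + b)) := by ring
      -- `N * N / N = N` holds also at `N = 0`
      _ = _ := by rw [mul_self_div_self]; ring
  rw [← hexp]
  exact one_sub_two_mul_le_tv hE hP hQ

/-- Lower bound for mixed text via a distinguishing set A with m(A) = h(A) + δ:
TV(mixed product, h^⊗N) ≥ 1 - 2 exp(-N(1-α)²δ²/2). -/
theorem tv_mixed_ge {S : Type*} [MeasurableSpace S]
    (m h : Measure S) [IsProbabilityMeasure m] [IsProbabilityMeasure h]
    (A : Set S) (hA : MeasurableSet A) (δ α : ℝ) (hδpos : 0 < δ)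
    (hmA : (m A).toReal = (h A).toReal + δ)
    (a b : ℕ) (hα0 : 0 ≤ α) (hα1 : α < 1)
    (ha : (a : ℝ) = (1 - α) * ((a : ℝ) + b)) :
    1 - 2 * Real.exp (-((((a : ℝ) + b) * (1 - α) ^ 2 * δ ^ 2) / 2))
      ≤ tv (Measure.pi fun i : Fin (a + b) => if (i : ℕ) < a then m else h)
           (Measure.pi fun _ : Fin (a + b) => h) :=
  tv_mixed_ge_general m h A hA δ α hδpos hmA a b ha
end

section
/- For any binary classification problem where the positive class has score distribution from measure P and the negative class from measure Q, any scoring-based detector's AUROC satisfies AUROC ≤ 1/2 + TV(P,Q) − TV(P,Q)²/2. -/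
open MeasureTheory Filter

set_option maxHeartbeats 1000000 in
open Set in
/-- AUROC bound: for independent X ~ P and Y ~ Q,
Pr(X > Y) + (1/2)Pr(X = Y) ≤ 1/2 + TV(P,Q) - TV(P,Q)²/2. -/
theorem auroc_le_of_tv (P Q : Measure ℝ) [IsProbabilityMeasure P] [IsProbabilityMeasure Q] :
    ((P.prod Q) {p : ℝ × ℝ | p.2 < p.1}).toReal
      + (1 / 2) * ((P.prod Q) {p : ℝ × ℝ | p.1 = p.2}).toReal
      ≤ 1 / 2 + tv P Q - (tv P Q) ^ 2 / 2 := by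
  obtain ⟨U, hU, hin, hout⟩ := hahn_decomposition (μ := P) (ν := Q)
  -- the common part μ0, and the remainders α, β
  obtain ⟨μ0, hμ0def⟩ : ∃ m : Measure ℝ, m = P.restrict Uᶜ + Q.restrict U := ⟨_, rfl⟩
  have hμ0P : μ0 ≤ P := by
    rw [Measure.le_iff]
    intro s hs
    have h1 : Q (s ∩ U) ≤ P (s ∩ U) := hin _ (hs.inter hU) inter_subset_right
    have h2 : P (s ∩ U) + P (s \ U) = P s := measure_inter_add_diff s hU
    have : μ0 s = P (s ∩ Uᶜ) + Q (s ∩ U) := by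
      simp [hμ0def, Measure.restrict_apply hs]
    rw [this, ← h2, ← Set.diff_eq]
    calc P (s \ U) + Q (s ∩ U) ≤ P (s \ U) + P (s ∩ U) := add_le_add le_rfl h1
      _ = P (s ∩ U) + P (s \ U) := by ring
  have hμ0Q : μ0 ≤ Q := by
    rw [Measure.le_iff]
    intro s hs
    have h1 : P (s ∩ Uᶜ) ≤ Q (s ∩ Uᶜ) := hout _ (hs.inter hU.compl) inter_subset_right
    have h2 : Q (s ∩ U) + Q (s \ U) = Q s := measure_inter_add_diff s hU
    have : μ0 s = P (s ∩ Uᶜ) + Q (s ∩ U) := by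
      simp [hμ0def, Measure.restrict_apply hs]
    rw [this, ← h2, Set.diff_eq]
    calc P (s ∩ Uᶜ) + Q (s ∩ U) ≤ Q (s ∩ Uᶜ) + Q (s ∩ U) := add_le_add h1 le_rfl
      _ = Q (s ∩ U) + Q (s ∩ Uᶜ) := by ring
  haveI : IsFiniteMeasure μ0 := isFiniteMeasure_of_le P hμ0P
  obtain ⟨α, hαdef⟩ : ∃ m : Measure ℝ, m = P - μ0 := ⟨_, rfl⟩
  obtain ⟨β, hβdef⟩ : ∃ m : Measure ℝ, m = Q - μ0 := ⟨_, rfl⟩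
  haveI : IsFiniteMeasure α := isFiniteMeasure_of_le P (hαdef ▸ Measure.sub_le)
  haveI : IsFiniteMeasure β := isFiniteMeasure_of_le Q (hβdef ▸ Measure.sub_le)
  have hP : P = μ0 + α := by
    rw [hαdef, add_comm]; exact (Measure.sub_add_cancel_of_le hμ0P).symm
  have hQ : Q = μ0 + β := by
    rw [hβdef, add_comm]; exact (Measure.sub_add_cancel_of_le hμ0Q).symm
  -- notations for real-valued measures
  set u : ℝ := (μ0 Set.univ).toReal with hu
  set a : ℝ := (α Set.univ).toReal with ha
  set b : ℝ := (β Set.univ).toReal with hb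
  have hua : u + a = 1 := by
    have := congrArg (fun m : Measure ℝ => (m Set.univ).toReal) hP
    simp only [Measure.add_apply] at this
    rw [measure_univ, ENNReal.toReal_add (measure_ne_top _ _) (measure_ne_top _ _)] at this
    simpa using this.symm
  have hub : u + b = 1 := by
    have := congrArg (fun m : Measure ℝ => (m Set.univ).toReal) hQ
    simp only [Measure.add_apply] at this
    rw [measure_univ, ENNReal.toReal_add (measure_ne_top _ _) (measure_ne_top _ _)] at this
    simpa using this.symm
  have hab : a = b := by linarith
  -- the value of tv
  have hcompl : ∀ (μ : Measure ℝ), IsProbabilityMeasure μ →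
      (μ Uᶜ).toReal = 1 - (μ U).toReal := by
    intro μ hμ
    have h := measure_add_measure_compl (μ := μ) hU
    rw [measure_univ] at h
    have := congrArg ENNReal.toReal h
    rw [ENNReal.toReal_add (measure_ne_top _ _) (measure_ne_top _ _)] at this
    simp at this; linarith
  have htU : (Q U).toReal ≤ (P U).toReal :=
    ENNReal.toReal_mono (measure_ne_top _ _) (hin U hU subset_rfl)
  set t : ℝ := (P U).toReal - (Q U).toReal with ht
  have hat : a = t := by
    have hμ0univ : (μ0 Set.univ).toReal = (P Uᶜ).toReal + (Q U).toReal := by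
      simp only [hμ0def, Measure.add_apply, Measure.restrict_apply_univ]
      exact ENNReal.toReal_add (measure_ne_top _ _) (measure_ne_top _ _)
    have hPc := hcompl P inferInstance
    rw [ht, ← hu] at *
    rw [hμ0univ, hPc] at hua
    linarith
  -- key bound: |P A - Q A| ≤ t for all measurable A
  have key : ∀ A : Set ℝ, MeasurableSet A → |(P A).toReal - (Q A).toReal| ≤ t := by
    intro A hA
    have split : ∀ (μ : Measure ℝ), IsFiniteMeasure μ → (μ (A ∩ U)).toReal + (μ (A \ U)).toReal
        = (μ A).toReal := by
      intro μ hf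
      haveI := hf
      rw [← ENNReal.toReal_add (measure_ne_top _ _) (measure_ne_top _ _),
        measure_inter_add_diff A hU]
    have splitU : ∀ (μ : Measure ℝ), IsFiniteMeasure μ → (μ (U ∩ A)).toReal + (μ (U \ A)).toReal
        = (μ U).toReal := by
      intro μ hf
      haveI := hf
      rw [← ENNReal.toReal_add (measure_ne_top _ _) (measure_ne_top _ _),
        measure_inter_add_diff U hA]
    have splitUc : ∀ (μ : Measure ℝ), IsFiniteMeasure μ → (μ (Uᶜ ∩ A)).toReal + (μ (Uᶜ \ A)).toReal
        = (μ Uᶜ).toReal := by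
      intro μ hf
      haveI := hf
      rw [← ENNReal.toReal_add (measure_ne_top _ _) (measure_ne_top _ _),
        measure_inter_add_diff Uᶜ hA]
    have e1 : (Q (U \ A)).toReal ≤ (P (U \ A)).toReal :=
      ENNReal.toReal_mono (measure_ne_top _ _) (hin _ (hU.diff hA) diff_subset)
    have e2 : (P (A \ U)).toReal ≤ (Q (A \ U)).toReal := by
      refine ENNReal.toReal_mono (measure_ne_top _ _) (hout _ (hA.diff hU) ?_)
      intro x hx; exact hx.2
    have e3 : (P (Uᶜ \ A)).toReal ≤ (Q (Uᶜ \ A)).toReal :=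
      ENNReal.toReal_mono (measure_ne_top _ _) (hout _ (hU.compl.diff hA) diff_subset)
    have e4 : (Q (A ∩ U)).toReal ≤ (P (A ∩ U)).toReal :=
      ENNReal.toReal_mono (measure_ne_top _ _) (hin _ (hA.inter hU) inter_subset_right)
    have hAUeq : ∀ (μ : Measure ℝ), (μ (A ∩ U)).toReal = (μ (U ∩ A)).toReal := by
      intro μ; rw [inter_comm]
    have hAUc : ∀ (μ : Measure ℝ), (μ (A \ U)).toReal = (μ (Uᶜ ∩ A)).toReal := by
      intro μ; rw [diff_eq_compl_inter]
    have hPc := hcompl P inferInstance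
    have hQc := hcompl Q inferInstance
    rw [abs_le]
    constructor
    · -- Q A - P A ≤ t, using Q Uᶜ - P Uᶜ = t
      have h1 := split P inferInstance; have h2 := split Q inferInstance
      have h3 := splitUc P inferInstance; have h4 := splitUc Q inferInstance
      have h5 := hAUc P; have h6 := hAUc Q
      have h7 := hAUeq P; have h8 := hAUeq Q
      rw [ht]
      nlinarith [e3, e4, hPc, hQc]
    · -- P A - Q A ≤ t, using P U - Q U = t
      have h1 := split P inferInstance; have h2 := split Q inferInstance
      have h3 := splitU P inferInstance; have h4 := splitU Q inferInstance
      have h7 := hAUeq P; have h8 := hAUeq Q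
      rw [ht]
      nlinarith [e1, e2]
  have htnonneg : 0 ≤ t := by rw [ht]; linarith
  have htv : tv P Q = t := by
    have hbdd : BddAbove (Set.range fun A : {A : Set ℝ // MeasurableSet A} =>
        |(P A.1).toReal - (Q A.1).toReal|) := by
      refine ⟨t, ?_⟩
      rintro x ⟨A, rfl⟩
      exact key A.1 A.2
    refine le_antisymm (ciSup_le fun A => key A.1 A.2) ?_
    have h2 := le_ciSup hbdd ⟨U, hU⟩
    rwa [abs_of_nonneg (sub_nonneg.mpr htU)] at h2
  -- the three sets
  set S : Set (ℝ × ℝ) := {p : ℝ × ℝ | p.2 < p.1} with hSdef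
  set E : Set (ℝ × ℝ) := {p : ℝ × ℝ | p.1 = p.2} with hEdef
  set S' : Set (ℝ × ℝ) := {p : ℝ × ℝ | p.1 < p.2} with hS'def
  have hS : MeasurableSet S := measurableSet_lt measurable_snd measurable_fst
  have hE : MeasurableSet E := measurableSet_eq_fun measurable_fst measurable_snd
  have hS' : MeasurableSet S' := measurableSet_lt measurable_fst measurable_snd
  have hdSE : Disjoint S E := by
    rw [Set.disjoint_left]; rintro ⟨x, y⟩ h1 h2
    simp only [hSdef, hEdef, Set.mem_setOf_eq] at h1 h2
    exact absurd h2.symm (ne_of_lt h1)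
  have hdSS' : Disjoint S S' := by
    rw [Set.disjoint_left]; rintro ⟨x, y⟩ h1 h2
    simp only [hSdef, hS'def, Set.mem_setOf_eq] at h1 h2
    exact absurd h2 (not_lt_of_gt h1)
  have hdES' : Disjoint E S' := by
    rw [Set.disjoint_left]; rintro ⟨x, y⟩ h1 h2
    simp only [hEdef, hS'def, Set.mem_setOf_eq] at h1 h2
    exact absurd h1 (ne_of_lt h2)
  have hcover : S ∪ (E ∪ S') = Set.univ := by
    ext ⟨x, y⟩
    simp only [hSdef, hEdef, hS'def, Set.mem_union, Set.mem_setOf_eq, Set.mem_univ, iff_true]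
    rcases lt_trichotomy y x with h | h | h
    · exact Or.inl h
    · exact Or.inr (Or.inl h.symm)
    · exact Or.inr (Or.inr h)
  -- diagonal term: (μ0 × μ0) S + ½ (μ0 × μ0) E = u²/2
  have hswap : (μ0.prod μ0) S' = (μ0.prod μ0) S := by
    have hpre : Prod.swap ⁻¹' S' = S := by
      ext ⟨x, y⟩
      simp [hSdef, hS'def, Prod.swap]
    conv_lhs => rw [← Measure.prod_swap]
    rw [Measure.map_apply measurable_swap hS', hpre]
  have hpart : (μ0.prod μ0) S + ((μ0.prod μ0) E + (μ0.prod μ0) S') = μ0 Set.univ * μ0 Set.univ := by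
    rw [← measure_union hdES' hS', ← measure_union (Set.disjoint_union_right.mpr ⟨hdSE, hdSS'⟩)
      (hE.union hS'), hcover, ← Set.univ_prod_univ, Measure.prod_prod]
  have hdiag : ((μ0.prod μ0) S).toReal + (1/2) * ((μ0.prod μ0) E).toReal = u^2 / 2 := by
    have hfin : ∀ X : Set (ℝ × ℝ), (μ0.prod μ0) X ≠ ⊤ := fun X => measure_ne_top _ _
    have := congrArg ENNReal.toReal hpart
    rw [ENNReal.toReal_add (hfin _) (by exact ENNReal.add_ne_top.mpr ⟨hfin _, hfin _⟩),
      ENNReal.toReal_add (hfin _) (hfin _), ENNReal.toReal_mul, hswap] at this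
    rw [hu]
    nlinarith [this]
  -- cross terms bound
  have group : ∀ (m : Measure (ℝ × ℝ)), IsFiniteMeasure m →
      (m S).toReal + (1/2) * (m E).toReal ≤ (m Set.univ).toReal := by
    intro m _
    have h1 : m S + m E ≤ m Set.univ := by
      rw [← measure_union hdSE hE]
      exact measure_mono (Set.subset_univ _)
    have h2 : (m S).toReal + (m E).toReal ≤ (m Set.univ).toReal := by
      rw [← ENNReal.toReal_add (measure_ne_top _ _) (measure_ne_top _ _)]
      exact ENNReal.toReal_mono (measure_ne_top _ _) h1
    have h3 : 0 ≤ (m E).toReal := ENNReal.toReal_nonneg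
    linarith
  -- decompose P.prod Q
  have hprodeq : P.prod Q = μ0.prod μ0 + μ0.prod β + (α.prod μ0 + α.prod β) := by
    rw [hP, hQ, Measure.add_prod, Measure.prod_add, Measure.prod_add]
  have happly : ∀ X : Set (ℝ × ℝ), ((P.prod Q) X).toReal = ((μ0.prod μ0) X).toReal
      + ((μ0.prod β) X).toReal + ((α.prod μ0) X).toReal + ((α.prod β) X).toReal := by
    intro X
    have e : (P.prod Q) X = (μ0.prod μ0) X + (μ0.prod β) X + ((α.prod μ0) X + (α.prod β) X) := by
      rw [hprodeq]; simp [Measure.add_apply]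
    rw [e,
      ENNReal.toReal_add
        (ENNReal.add_ne_top.mpr ⟨measure_ne_top _ _, measure_ne_top _ _⟩)
        (ENNReal.add_ne_top.mpr ⟨measure_ne_top _ _, measure_ne_top _ _⟩),
      ENNReal.toReal_add (measure_ne_top _ _) (measure_ne_top _ _),
      ENNReal.toReal_add (measure_ne_top _ _) (measure_ne_top _ _)]
    ring
  have hmb : ((μ0.prod β) Set.univ).toReal = u * b := by
    rw [← Set.univ_prod_univ, Measure.prod_prod, ENNReal.toReal_mul]
  have ham : ((α.prod μ0) Set.univ).toReal = a * u := by
    rw [← Set.univ_prod_univ, Measure.prod_prod, ENNReal.toReal_mul]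
  have hax : ((α.prod β) Set.univ).toReal = a * b := by
    rw [← Set.univ_prod_univ, Measure.prod_prod, ENNReal.toReal_mul]
  have g1 := group (μ0.prod β) inferInstance
  have g2 := group (α.prod μ0) inferInstance
  have g3 := group (α.prod β) inferInstance
  rw [hmb] at g1; rw [ham] at g2; rw [hax] at g3
  rw [happly S, happly E, htv, ← hat]
  nlinarith [hdiag, g1, g2, g3, hua, hab, htnonneg, hat]
end

section
/- Combining the AUROC bound with the product-measure TV bound: if TV(m,h) = δ and texts are formed by N = nk(1−α) independent machine sequences, then the best achievable AUROC of any detector distinguishing m^{⊗N} from h^{⊗N} is at most 1 − (1/2)(1 − δ)^{2N}. -/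
open MeasureTheory Filter

/-! The common part `μ = min(dm, dh)` of `m` and `h` has mass at least `1 - δ`, so the
score law `λ` of `μ^{⊗N}` is a common minorant of both score laws, of mass at least
`(1 - δ)^N`. Now `1 - AUROC = P(X < Y) + P(X = Y) / 2` is at least the same expression
for `λ ⊗ λ`, which by exchangeability is `λ(univ)^2 / 2`. -/

open Set

theorem MeasureTheory.Measure.pi_mono {ι : Type*} [Fintype ι] {α : ι → Type*}
    [∀ i, MeasurableSpace (α i)] {μ ν : ∀ i, Measure (α i)} (h : ∀ i, μ i ≤ ν i) :
    Measure.pi μ ≤ Measure.pi ν := by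
  have hle : OuterMeasure.pi (fun i => (μ i).toOuterMeasure) ≤
      OuterMeasure.pi fun i => (ν i).toOuterMeasure :=
    OuterMeasure.le_pi.2 fun s _ =>
      (OuterMeasure.pi_pi_le _ s).trans (Finset.prod_le_prod' fun i _ => h i (s i))
  refine Measure.le_iff.2 fun s hs => ?_
  rw [Measure.pi_def, Measure.pi_def, toMeasure_apply _ _ hs, toMeasure_apply _ _ hs]
  exact hle s

section Overlap

variable {α : Type*} [MeasurableSpace α]

lemma measureReal_sub_measureReal_le_tv (P Q : Measure α) [IsFiniteMeasure P] [IsFiniteMeasure Q]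
    {A : Set α} (hA : MeasurableSet A) : P.real A - Q.real A ≤ tv P Q := by
  have hbdd : BddAbove (range fun B : {B : Set α // MeasurableSet B} =>
      |P.real B.1 - Q.real B.1|) := by
    refine ⟨P.real univ + Q.real univ, ?_⟩
    rintro _ ⟨B, rfl⟩
    have hPB : P.real B.1 ≤ P.real univ := measureReal_mono (subset_univ _)
    have hQB : Q.real B.1 ≤ Q.real univ := measureReal_mono (subset_univ _)
    rw [abs_sub_le_iff]
    constructor <;> linarith [measureReal_nonneg (μ := P) (s := B.1),
      measureReal_nonneg (μ := Q) (s := B.1)]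
  exact (le_abs_self _).trans (le_ciSup hbdd ⟨A, hA⟩)

lemma exists_le_le_one_sub_tv_le (P Q : Measure α) [IsProbabilityMeasure P]
    [IsProbabilityMeasure Q] :
    ∃ μ : Measure α, μ ≤ P ∧ μ ≤ Q ∧ 1 - tv P Q ≤ μ.real univ := by
  set ρ := P + Q
  set f := P.rnDeriv ρ
  set g := Q.rnDeriv ρ
  have hf : Measurable f := Measure.measurable_rnDeriv _ _
  have hg : Measurable g := Measure.measurable_rnDeriv _ _
  have hP : ρ.withDensity f = P := Measure.withDensity_rnDeriv_eq _ _
    (Measure.absolutelyContinuous_of_le (Measure.le_add_right le_rfl))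
  have hQ : ρ.withDensity g = Q := Measure.withDensity_rnDeriv_eq _ _
    (Measure.absolutelyContinuous_of_le (Measure.le_add_left le_rfl))
  set μ := ρ.withDensity fun x => min (f x) (g x)
  have hμP : μ ≤ P := hP ▸ withDensity_mono (.of_forall fun x => min_le_left _ _)
  have hμQ : μ ≤ Q := hQ ▸ withDensity_mono (.of_forall fun x => min_le_right _ _)
  have : IsFiniteMeasure μ := isFiniteMeasure_of_le P hμP
  set A := {x | g x < f x}
  have hA : MeasurableSet A := measurableSet_lt hg hf
  have hdensity : (fun x => min (f x) (g x)) + A.indicator f = f + A.indicator g := by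
    ext x
    by_cases hx : x ∈ A
    · simp [hx, min_eq_right (le_of_lt (show g x < f x from hx)), add_comm]
    · simp [hx, min_eq_left (not_lt.1 (show ¬g x < f x from hx))]
  have hmeasure : μ + P.restrict A = P + Q.restrict A := by
    rw [← hP, ← hQ, restrict_withDensity hA, restrict_withDensity hA,
      ← withDensity_indicator hA, ← withDensity_indicator hA,
      ← withDensity_add_left (by fun_prop), ← withDensity_add_left hf, hdensity]
  have hmass : μ.real univ + P.real A = 1 + Q.real A := by
    have := congrArg (fun κ : Measure α => κ.real univ) hmeasure
    simpa [measureReal_add_apply] using this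
  exact ⟨μ, hμP, hμQ, by linarith [measureReal_sub_measureReal_le_tv P Q hA]⟩

end Overlap

/-- `P(X > Y) + P(X = Y) / 2` for independent scores `X ∼ μ`, `Y ∼ ν`. -/
noncomputable def auroc (μ ν : Measure ℝ) : ℝ :=
  (μ.prod ν).real {p | p.2 < p.1} + 1 / 2 * (μ.prod ν).real {p | p.1 = p.2}

lemma measureReal_gt_add_lt_add_eq (κ : Measure (ℝ × ℝ)) [IsFiniteMeasure κ] :
    κ.real {p | p.2 < p.1} + κ.real {p | p.1 < p.2} + κ.real {p | p.1 = p.2} = κ.real univ := by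
  have hne : {p : ℝ × ℝ | p.2 < p.1} ∪ {p | p.1 < p.2} = {p | p.1 = p.2}ᶜ := by
    ext p
    simp only [mem_union, mem_ofPred_eq, mem_compl_iff]
    exact ⟨fun h => h.elim ne_of_gt ne_of_lt, fun h => (Ne.lt_or_gt h).symm⟩
  have hdisj : Disjoint {p : ℝ × ℝ | p.2 < p.1} {p | p.1 < p.2} :=
    disjoint_left.2 fun _ h₁ h₂ => lt_asymm (α := ℝ) h₁ h₂
  rw [← measureReal_union hdisj (measurableSet_lt measurable_fst measurable_snd), hne, add_comm,
    measureReal_add_measureReal_compl (measurableSet_eq_fun measurable_fst measurable_snd)]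

lemma measureReal_prod_self_lt_add_half_eq (μ : Measure ℝ) [IsFiniteMeasure μ] :
    (μ.prod μ).real {p | p.1 < p.2} + 1 / 2 * (μ.prod μ).real {p | p.1 = p.2} =
      1 / 2 * μ.real univ ^ 2 := by
  have hswap : (μ.prod μ).real {p | p.2 < p.1} = (μ.prod μ).real {p | p.1 < p.2} := by
    conv_lhs => rw [← Measure.prod_swap]
    rw [map_measureReal_apply measurable_swap (measurableSet_lt measurable_snd measurable_fst)]
    rfl
  have htotal := measureReal_gt_add_lt_add_eq (μ.prod μ)
  rw [← univ_prod_univ, measureReal_prod_prod] at htotal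
  linarith

lemma auroc_le_one_sub_half_sq_of_le {μ P Q : Measure ℝ} [IsProbabilityMeasure P]
    [IsProbabilityMeasure Q] (hP : μ ≤ P) (hQ : μ ≤ Q) :
    auroc P Q ≤ 1 - 1 / 2 * μ.real univ ^ 2 := by
  have : IsFiniteMeasure μ := isFiniteMeasure_of_le P hP
  have hle : ∀ S, (μ.prod μ).real S ≤ (P.prod Q).real S := fun S =>
    ENNReal.toReal_mono (measure_ne_top _ _) (Measure.prod_mono hP hQ S)
  have hpart := measureReal_gt_add_lt_add_eq (P.prod Q)
  rw [probReal_univ] at hpart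
  have hself := measureReal_prod_self_lt_add_half_eq μ
  have hlt := hle {p | p.1 < p.2}
  have heq := hle {p | p.1 = p.2}
  unfold auroc
  linarith

theorem auroc_product_le_general {S : Type*} [MeasurableSpace S]
    (m h : Measure S) [IsProbabilityMeasure m] [IsProbabilityMeasure h]
    (δ : ℝ) (hδ : tv m h = δ) (hδ1 : δ ≤ 1)
    (N : ℕ) (s : (Fin N → S) → ℝ) (hs : Measurable s) :
    ((((Measure.pi fun _ : Fin N => m).map s).prod
        ((Measure.pi fun _ : Fin N => h).map s)) {p : ℝ × ℝ | p.2 < p.1}).toReal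
      + (1 / 2) * ((((Measure.pi fun _ : Fin N => m).map s).prod
        ((Measure.pi fun _ : Fin N => h).map s)) {p : ℝ × ℝ | p.1 = p.2}).toReal
      ≤ 1 - (1 / 2) * (1 - δ) ^ (2 * N) := by
  obtain ⟨μ, hμm, hμh, hoverlap⟩ := exists_le_le_one_sub_tv_le m h
  have : IsFiniteMeasure μ := isFiniteMeasure_of_le m hμm
  have : IsProbabilityMeasure ((Measure.pi fun _ : Fin N => m).map s) :=
    Measure.isProbabilityMeasure_map hs.aemeasurable
  have : IsProbabilityMeasure ((Measure.pi fun _ : Fin N => h).map s) :=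
    Measure.isProbabilityMeasure_map hs.aemeasurable
  have hmass : ((Measure.pi fun _ : Fin N => μ).map s).real univ = μ.real univ ^ N := by
    rw [map_measureReal_apply hs MeasurableSet.univ, preimage_univ, measureReal_def,
      Measure.pi_univ, Finset.prod_const, Finset.card_fin, ENNReal.toReal_pow, measureReal_def]
  refine (auroc_le_one_sub_half_sq_of_le (Measure.map_mono (Measure.pi_mono fun _ => hμm) hs)
    (Measure.map_mono (Measure.pi_mono fun _ => hμh) hs)).trans ?_
  have hδ' : 0 ≤ 1 - δ := sub_nonneg.2 hδ1
  have hbase : (1 - δ) ^ N ≤ μ.real univ ^ N := pow_le_pow_left₀ hδ' (hδ ▸ hoverlap) N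
  rw [hmass, mul_comm 2 N, pow_mul]
  linarith [pow_le_pow_left₀ (pow_nonneg hδ' N) hbase 2]

/-- Combining the AUROC bound with the product TV bound: any scoring-based detector
distinguishing m^⊗N from h^⊗N has AUROC at most 1 - (1/2)(1-δ)^(2N). -/
theorem auroc_product_le {S : Type*} [MeasurableSpace S]
    (m h : Measure S) [IsProbabilityMeasure m] [IsProbabilityMeasure h]
    (δ : ℝ) (hδ : tv m h = δ) (hδ0 : 0 ≤ δ) (hδ1 : δ ≤ 1)
    (N : ℕ) (hN : 0 < N) (s : (Fin N → S) → ℝ) (hs : Measurable s) :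
    ((((Measure.pi fun _ : Fin N => m).map s).prod
        ((Measure.pi fun _ : Fin N => h).map s)) {p : ℝ × ℝ | p.2 < p.1}).toReal
      + (1 / 2) * ((((Measure.pi fun _ : Fin N => m).map s).prod
        ((Measure.pi fun _ : Fin N => h).map s)) {p : ℝ × ℝ | p.1 = p.2}).toReal
      ≤ 1 - (1 / 2) * (1 - δ) ^ (2 * N) :=
  auroc_product_le_general m h δ hδ hδ1 N s hs
end
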